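/- Let c = Σ_{k≥0} k! x1^k be the Ferfera series. Then for every word η ∈ X*, the antipode S of the output feedback Hopf algebra satisfies (S a_{η x1})(−c) = deg(a_η) · (S a_η)(−c) and (S a_{η x0})(−c) = deg(a_η) · (S a_η)(−c), where deg(a_η) = 2|η|_{x0} + |η|_{x1} + 1. -/

import Mathlib

open scoped TensorProduct

noncomputable section

namespace Paper

/-- Words over the alphabet `X = {x0, x1}`, encoded as lists over `Fin 2`
(`0` stands for the letter `x0` and `1` for the letter `x1`). -/
abbrev Word : Type := List (Fin 2)

/-- Formal power series `ℝ⟨⟨X⟩⟩`, given by their coefficient functions `η ↦ ⟨c,η⟩`. -/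
abbrev Series : Type := Word → ℝ

/-- The left shift `x_i⁻¹(c)`. -/
def lshift (i : Fin 2) (c : Series) : Series := fun w => c (i :: w)

/-- Left concatenation `x_i c` of the letter `x_i` onto every word of `c`. -/
def lconcat (i : Fin 2) (c : Series) : Series := fun w =>
  match w with
  | [] => 0
  | j :: v => if j = i then c v else 0

/-- Right concatenation `p x_i` of the letter `x_i` onto every word of `p`. -/
def rconcat {R : Type*} [Zero R] (i : Fin 2) (p : Word → R) : Word → R := fun w =>
  if w.getLast? = some i then p w.dropLast else 0

/-- The series of a single word. -/
def ind (η : Word) : Series := fun w => if w = η then 1 else 0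

/-- The empty word as a series, the unit `∅` (often written `1`). -/
def one : Series := ind []

/-- The shuffle product, defined coefficientwise by the recursion
`⟨c ⧢ d, ∅⟩ = ⟨c,∅⟩⟨d,∅⟩` and `⟨c ⧢ d, x_i w⟩ = ⟨x_i⁻¹(c) ⧢ d, w⟩ + ⟨c ⧢ x_i⁻¹(d), w⟩`,
which is the bilinear (and ultrametrically continuous) extension of the recursive
shuffle product of words. -/
def shuffleFn : Series → Series → Word → ℝ
  | c, d, [] => c [] * d []
  | c, d, i :: w => shuffleFn (lshift i c) d w + shuffleFn c (lshift i d) w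

/-- The shuffle product on `ℝ⟨⟨X⟩⟩`. -/
def sh (c d : Series) : Series := shuffleFn c d

/-- The map `φ_d(x_i)` for the modified composition product:
`φ_d(x0)(e) = x0 e` and `φ_d(x1)(e) = x1 e + x0 (d ⧢ e)`. -/
def phiLetter (d : Series) (i : Fin 2) (e : Series) : Series :=
  if i = 0 then lconcat 0 e else lconcat 1 e + lconcat 0 (sh d e)

/-- `φ_d(η)`, the algebra-homomorphism extension determined by
`φ_d(x_i η) = φ_d(x_i) ∘ φ_d(η)` and `φ_d(∅) = id`. -/
def phi (d : Series) : Word → Series → Series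
  | [], e => e
  | i :: η, e => phiLetter d i (phi d η e)

/-- The modified composition product `c ∘̃ d = Σ_η ⟨c,η⟩ φ_d(η)(1)`. -/
def mcomp (c d : Series) : Series := fun w => ∑' η : Word, c η * phi d η one w

/-- The map `ψ_d(x_i)` for the composition product:
`ψ_d(x0)(e) = x0 e` and `ψ_d(x1)(e) = x0 (d ⧢ e)`. -/
def psiLetter (d : Series) (i : Fin 2) (e : Series) : Series :=
  if i = 0 then lconcat 0 e else lconcat 0 (sh d e)

/-- `ψ_d(η)`, determined by `ψ_d(x_i η) = ψ_d(x_i) ∘ ψ_d(η)` and `ψ_d(∅) = id`. -/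
def psi (d : Series) : Word → Series → Series
  | [], e => e
  | i :: η, e => psiLetter d i (psi d η e)

/-- The composition product `c ∘ d = Σ_η ⟨c,η⟩ ψ_d(η)(1)`. -/
def comp (c d : Series) : Series := fun w => ∑' η : Word, c η * psi d η one w

/-- The group operation on `ℝ⟨⟨X_δ⟩⟩ = {δ + c}`, transported to the `c`-parts:
`c_δ ∘ d_δ = δ + (d + c ∘̃ d)`. -/
def gop (c d : Series) : Series := d + mcomp c d

/-- The Ferfera series `c = Σ_{k ≥ 0} k! x1^k`. -/
def ferfera : Series := fun w =>
  if w = List.replicate w.length (1 : Fin 2) then (Nat.factorial w.length : ℝ) else 0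

/-- The degree of a word, `deg(η) = 2|η|_{x0} + |η|_{x1} + 1`. -/
def degW (η : Word) : ℕ := 2 * η.count 0 + η.count 1 + 1

/-- The output feedback Hopf algebra `H`: the free unital commutative `ℝ`-algebra on the
coordinate functions `a_η`, realized as polynomials in commuting variables indexed by words. -/
abbrev H : Type := MvPolynomial Word ℝ

/-- The coordinate function `a_η`. -/
def aw (η : Word) : H := MvPolynomial.X η

/-- Character (pointwise) evaluation of elements of `H` at a series `c`:
`(a_{η₁} ⋯ a_{η_l})(c) = ⟨c,η₁⟩ ⋯ ⟨c,η_l⟩`, extended as an algebra map. -/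
def evalS (c : Series) : H →ₐ[ℝ] ℝ := MvPolynomial.aeval c

/-- Evaluation of `H ⊗ H` at a pair of series: `(p ⊗ q)(c,d) = p(c) q(d)`. -/
def evalPair (c d : Series) : H ⊗[ℝ] H →ₗ[ℝ] ℝ :=
  (LinearMap.mul' ℝ ℝ).comp (TensorProduct.map (evalS c).toLinearMap (evalS d).toLinearMap)

/-- The counit `ε` of `H`: `ε(a_η) = 0`, `ε(1) = 1`. -/
def counit : H →ₐ[ℝ] ℝ := evalS 0

/-- The defining property of the full coproduct `Δ` of the output feedback Hopf algebra:
`Δ a_η = Δ̃ a_η + 1 ⊗ a_η` where `Δ̃ a_η (c,d) = ⟨c ∘̃ d, η⟩`, i.e.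
`(Δ a_η)(c,d) = ⟨c ∘̃ d, η⟩ + ⟨d, η⟩` for all series `c, d`; `Δ` is an algebra morphism. -/
def IsFBCoproduct (Δ : H →ₐ[ℝ] (H ⊗[ℝ] H)) : Prop :=
  ∀ (η : Word) (c d : Series), evalPair c d (Δ (aw η)) = mcomp c d η + d η

/-- `S` is an antipode for the coproduct `Δ` (with counit `ε`):
`μ ∘ (S ⊗ id) ∘ Δ = 1·ε = μ ∘ (id ⊗ S) ∘ Δ`. -/
def IsAntipode (Δ : H →ₐ[ℝ] (H ⊗[ℝ] H)) (S : H →ₗ[ℝ] H) : Prop :=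
  (∀ p : H, LinearMap.mul' ℝ H (TensorProduct.map S LinearMap.id (Δ p)) = counit p • 1) ∧
  (∀ p : H, LinearMap.mul' ℝ H (TensorProduct.map LinearMap.id S (Δ p)) = counit p • 1)

/-- The right-augmentation operator `θ̃_i`, the derivation on `H` with `θ̃_i(a_η) = a_{η x_i}`. -/
def thetaR (i : Fin 2) : Derivation ℝ H H :=
  MvPolynomial.mkDerivation ℝ fun η => aw (η ++ [i])

/-- The left-augmentation operator `θ_i`, the derivation on `H` with `θ_i(a_η) = a_{x_i η}`. -/
def thetaL (i : Fin 2) : Derivation ℝ H H :=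
  MvPolynomial.mkDerivation ℝ fun η => aw (i :: η)

/-- The multiplication operator `κ_∅(h) = h · a_∅`. -/
def kappaE : H →ₗ[ℝ] H := LinearMap.mulRight ℝ (aw [])

/-- The shuffle coefficient `⟨ξ ⧢ ν, η⟩`. -/
def shCoeff (ξ ν η : Word) : ℝ := sh (ind ξ) (ind ν) η

/-- The finite set of words of length `n`. -/
def wordsLen (n : ℕ) : Finset Word :=
  (Finset.univ : Finset (Fin n → Fin 2)).image List.ofFn

/-- The deshuffle coproduct `Δ_⧢ a_η = Σ_{ξ,ν} ⟨ξ ⧢ ν, η⟩ a_ξ ⊗ a_ν`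
(the unique coproduct satisfying `Δ_⧢ a_∅ = a_∅ ⊗ a_∅` and the coderivation recursions
with respect to the augmentation operators). -/
def deshuffle (η : Word) : H ⊗[ℝ] H :=
  ∑ k ∈ Finset.range (η.length + 1), ∑ ξ ∈ wordsLen k, ∑ ν ∈ wordsLen (η.length - k),
    shCoeff ξ ν η • (aw ξ ⊗ₜ[ℝ] aw ν)

/-- Iterated integrals: `E_∅[u](t) = 1`, `E_{x_i η}[u](t) = ∫₀ᵗ u_i(s) E_η[u](s) ds`. -/
def E (u : Fin 2 → ℝ → ℝ) : Word → ℝ → ℝ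
  | [], _ => 1
  | i :: η, t => ∫ s in (0:ℝ)..t, u i s * E u η s

end Paper

/-!
Evaluate the antipode identity `μ ∘ (S ⊗ id) ∘ Δ = ε` on `a_η` at a series `e`. This only
involves `(id ⊗ ev_e)(Δ a_η) ∈ H`, whose values at all series are known from the defining
property of `Δ`; a real polynomial being determined by its values, it is
`Σ_ξ ⟨φ_e(ξ)(1), η⟩ a_ξ + ⟨e, η⟩`. The identity then says
that `ξ ↦ (S a_ξ)(e)` is a left inverse of `e` for the group law `gop`. Right composition
`t ↦ t ∘̃ d` is injective, because the recursions of `∘̃` along the first letter of a word recover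
`t` letter by letter, so this inverse is unique.

For `e = -c`, the candidate inverse is `η ↦ ∏ deg(q)`, the product over the proper prefixes `q`
of `η`, and the recursion of the theorem is the last factor of that product. The candidate is
checked inside the family `c_m = Σ_k (m+1)⋯(m+k) x1^k`, which contains `c = c_0` and is closed
under shuffles, `c_a ⧢ c_b = c_{a+b+1}`.
-/

namespace Paper

theorem sh_nil (c d : Series) : sh c d [] = c [] * d [] := rfl

theorem sh_cons (c d : Series) (i : Fin 2) (w : Word) :
    sh c d (i :: w) = sh (lshift i c) d w + sh c (lshift i d) w := rfl

theorem sh_smul_left (r : ℝ) (w : Word) : ∀ c d : Series, sh (r • c) d w = r * sh c d w := by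
  induction w with
  | nil => intro c d; simp only [sh_nil, Pi.smul_apply, smul_eq_mul]; ring
  | cons i w ih =>
    intro c d
    rw [sh_cons, sh_cons, show lshift i (r • c) = r • lshift i c from rfl, ih, ih]
    ring

theorem sh_smul_right (r : ℝ) (w : Word) : ∀ c d : Series, sh c (r • d) w = r * sh c d w := by
  induction w with
  | nil => intro c d; simp only [sh_nil, Pi.smul_apply, smul_eq_mul]; ring
  | cons i w ih =>
    intro c d
    rw [sh_cons, sh_cons, show lshift i (r • d) = r • lshift i d from rfl, ih, ih]
    ring

theorem sh_zero_left (d : Series) (w : Word) : sh 0 d w = 0 := by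
  simpa using sh_smul_left 0 w 0 d

theorem sh_zero_right (c : Series) (w : Word) : sh c 0 w = 0 := by
  simpa using sh_smul_right 0 w c 0

theorem sh_add_right (w : Word) : ∀ c d d' : Series, sh c (d + d') w = sh c d w + sh c d' w := by
  induction w with
  | nil => intro c d d'; simp only [sh_nil, Pi.add_apply]; ring
  | cons i w ih =>
    intro c d d'
    rw [sh_cons, sh_cons, sh_cons, show lshift i (d + d') = lshift i d + lshift i d' from rfl,
      ih, ih]
    ring

theorem sh_sum_right {ι : Type*} (s : Finset ι) (c : Series) (d : ι → Series) (w : Word) :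
    sh c (∑ k ∈ s, d k) w = ∑ k ∈ s, sh c (d k) w := by
  induction s using Finset.cons_induction with
  | empty => exact sh_zero_right c w
  | cons k s hk ih => rw [Finset.sum_cons, Finset.sum_cons, sh_add_right, ih]

theorem sh_congr_right (w : Word) : ∀ c d d' : Series,
    (∀ u : Word, u.length ≤ w.length → d u = d' u) → sh c d w = sh c d' w := by
  induction w with
  | nil => intro c d d' h; rw [sh_nil, sh_nil, h [] le_rfl]
  | cons i w ih =>
    intro c d d' h
    rw [sh_cons, sh_cons, ih _ d d' fun u hu => h u (by simp; omega),
      ih c (lshift i d) (lshift i d') fun u hu => h (i :: u) (by simp; omega)]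

theorem sh_eq_zero_of_length_lt (w : Word) : ∀ (N : ℕ) (c d : Series),
    (∀ u : Word, u.length < N → d u = 0) → w.length < N → sh c d w = 0 := by
  induction w with
  | nil => intro N c d hd hN; rw [sh_nil, hd [] hN, mul_zero]
  | cons i w ih =>
    intro N c d hd hN
    rw [sh_cons, ih N _ d hd (by simp at hN; omega),
      ih (N - 1) c (lshift i d) (fun u hu => hd (i :: u) (by simp; omega)) (by simp at hN; omega),
      add_zero]

theorem one_cons (i : Fin 2) (w : Word) : one (i :: w) = 0 := by simp [one, ind]

theorem phi_nil (d e : Series) : phi d [] e = e := rfl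

theorem phi_cons_zero_cons (d : Series) (ξ : Word) (e : Series) (j : Fin 2) (v : Word) :
    phi d (0 :: ξ) e (j :: v) = if j = 0 then phi d ξ e v else 0 := rfl

theorem phi_cons_one_cons (d : Series) (ξ : Word) (e : Series) (j : Fin 2) (v : Word) :
    phi d (1 :: ξ) e (j :: v) =
      (if j = 1 then phi d ξ e v else 0) + (if j = 0 then sh d (phi d ξ e) v else 0) := rfl

theorem phi_cons_nil (d : Series) (i : Fin 2) (ξ : Word) (e : Series) :
    phi d (i :: ξ) e [] = 0 := by
  match i with
  | 0 => rfl
  | 1 => exact add_zero (0 : ℝ)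

theorem phi_one_eq_zero_of_length_lt (d : Series) (ξ : Word) :
    ∀ w : Word, w.length < ξ.length → phi d ξ one w = 0 := by
  induction ξ with
  | nil => intro w h; simp at h
  | cons i ξ ih =>
    rintro (_ | ⟨j, v⟩) h
    · exact phi_cons_nil d i ξ one
    · have hv : v.length < ξ.length := by simpa using h
      match i with
      | 0 => rw [phi_cons_zero_cons, ih v hv, ite_self]
      | 1 =>
        rw [phi_cons_one_cons, ih v hv, sh_eq_zero_of_length_lt v _ d _ ih hv, ite_self, ite_self,
          add_zero]

def wordsLe : ℕ → Finset Word
  | 0 => {[]}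
  | n + 1 => insert [] ((wordsLe n ×ˢ Finset.univ).image fun p => p.2 :: p.1)

theorem mem_wordsLe (n : ℕ) (ξ : Word) : ξ ∈ wordsLe n ↔ ξ.length ≤ n := by
  induction n generalizing ξ with
  | zero => simp [wordsLe]
  | succ n ih =>
    rcases ξ with _ | ⟨i, ξ⟩
    · simp [wordsLe]
    · simp [wordsLe, ih]

theorem sum_wordsLe_succ (n : ℕ) (F : Word → ℝ) :
    ∑ ξ ∈ wordsLe (n + 1), F ξ = F [] + ∑ ξ ∈ wordsLe n, (F (0 :: ξ) + F (1 :: ξ)) := by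
  rw [wordsLe, Finset.sum_insert (by simp), Finset.sum_image (by simp), Finset.sum_product]
  simp only [Fin.sum_univ_two]

theorem mcomp_eq_sum (t d : Series) (w : Word) {s : Finset Word}
    (hs : ∀ ξ : Word, ξ.length ≤ w.length → ξ ∈ s) :
    mcomp t d w = ∑ ξ ∈ s, t ξ * phi d ξ one w :=
  tsum_eq_sum fun ξ hξ => by
    rw [phi_one_eq_zero_of_length_lt d ξ w (not_le.1 fun h => hξ (hs ξ h)), mul_zero]

theorem mcomp_eq_sum_wordsLe (t d : Series) (w : Word) :
    mcomp t d w = ∑ ξ ∈ wordsLe w.length, t ξ * phi d ξ one w :=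
  mcomp_eq_sum t d w fun ξ => (mem_wordsLe _ ξ).2

theorem mcomp_nil (t d : Series) : mcomp t d [] = t [] := by
  rw [mcomp_eq_sum_wordsLe, List.length_nil, wordsLe, Finset.sum_singleton]
  exact mul_one _

theorem mcomp_cons_one (t d : Series) (v : Word) :
    mcomp t d (1 :: v) = mcomp (lshift 1 t) d v := by
  rw [mcomp_eq_sum_wordsLe, List.length_cons, sum_wordsLe_succ, mcomp_eq_sum_wordsLe]
  simp [phi_cons_zero_cons, phi_cons_one_cons, phi_nil, one_cons, lshift]

theorem mcomp_cons_zero (t d : Series) (v : Word) :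
    mcomp t d (0 :: v) = mcomp (lshift 0 t) d v + sh d (mcomp (lshift 1 t) d) v := by
  have hsh : sh d (mcomp (lshift 1 t) d) v
      = ∑ ξ ∈ wordsLe v.length, t (1 :: ξ) * sh d (phi d ξ one) v := by
    rw [sh_congr_right v d _ (∑ ξ ∈ wordsLe v.length, t (1 :: ξ) • phi d ξ one) fun u hu => by
        simp only [Finset.sum_apply, Pi.smul_apply, smul_eq_mul]
        exact mcomp_eq_sum _ d u fun ξ hξ => (mem_wordsLe _ ξ).2 (hξ.trans hu),
      sh_sum_right]
    simp only [sh_smul_right]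
  rw [hsh, mcomp_eq_sum_wordsLe, List.length_cons, sum_wordsLe_succ, mcomp_eq_sum_wordsLe,
    ← Finset.sum_add_distrib]
  simp [phi_cons_zero_cons, phi_cons_one_cons, phi_nil, one_cons, lshift]

theorem mcomp_smul_left (r : ℝ) (t d : Series) : mcomp (r • t) d = r • mcomp t d :=
  funext fun w => by
    simp only [mcomp, Pi.smul_apply, smul_eq_mul, mul_assoc]
    exact tsum_mul_left

theorem mcomp_left_injective (d : Series) : Function.Injective fun t => mcomp t d := by
  intro t t' h
  funext ξ
  induction ξ generalizing t t' with
  | nil => simpa only [mcomp_nil] using congrFun h []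
  | cons i ξ ih =>
    have h1 : mcomp (lshift 1 t) d = mcomp (lshift 1 t') d := funext fun v => by
      simpa only [mcomp_cons_one] using congrFun h (1 :: v)
    match i with
    | 0 =>
      have h0 : mcomp (lshift 0 t) d = mcomp (lshift 0 t') d := funext fun v => by
        simpa only [mcomp_cons_zero, h1, add_left_inj] using congrFun h (0 :: v)
      exact ih h0
    | 1 => exact ih h1

theorem gop_left_injective (d : Series) : Function.Injective fun t => gop t d :=
  fun _ _ h => mcomp_left_injective d (add_left_cancel h)

def letterWeight (i : Fin 2) : ℕ := if i = 0 then 2 else 1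

theorem letterWeight_zero : letterWeight 0 = 2 := rfl

theorem letterWeight_one : letterWeight 1 = 1 := rfl

theorem degW_nil : degW [] = 1 := rfl

theorem degW_cons (i : Fin 2) (η : Word) : degW (i :: η) = letterWeight i + degW η := by
  match i with
  | 0 => simp [degW, letterWeight]; ring
  | 1 => simp [degW, letterWeight]; ring

/-- `ferferaAsc m = Σ_k (m+1)(m+2)⋯(m+k) x1^k`. -/
def ferferaAsc : ℕ → Series
  | _, [] => 1
  | m, i :: v => if i = 0 then 0 else (m + 1) * ferferaAsc (m + 1) v

theorem ferferaAsc_cons_zero (m : ℕ) (v : Word) : ferferaAsc m (0 :: v) = 0 := if_pos rfl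

theorem ferferaAsc_cons_one (m : ℕ) (v : Word) :
    ferferaAsc m (1 :: v) = (m + 1) * ferferaAsc (m + 1) v := if_neg (by decide)

theorem lshift_zero_ferferaAsc (m : ℕ) : lshift 0 (ferferaAsc m) = 0 :=
  funext (ferferaAsc_cons_zero m)

theorem lshift_one_ferferaAsc (m : ℕ) :
    lshift 1 (ferferaAsc m) = ((m : ℝ) + 1) • ferferaAsc (m + 1) :=
  funext (ferferaAsc_cons_one m)

theorem factorial_mul_ferferaAsc (w : Word) : ∀ m : ℕ,
    m.factorial * ferferaAsc m w
      = if w = List.replicate w.length 1 then ((m + w.length).factorial : ℝ) else 0 := by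
  induction w with
  | nil => intro m; simp [ferferaAsc]
  | cons i v ih =>
    intro m
    match i with
    | 0 => simp [ferferaAsc, List.replicate_succ]
    | 1 =>
      have h := ih (m + 1)
      simp only [ferferaAsc, List.length_cons, List.replicate_succ, List.cons.injEq, true_and,
        if_neg (show (1 : Fin 2) ≠ 0 by decide)] at h ⊢
      rw [show m + (v.length + 1) = m + 1 + v.length by omega, ← h, Nat.factorial_succ]
      push_cast
      ring

theorem ferferaAsc_zero : ferferaAsc 0 = ferfera :=
  funext fun w => by simpa [ferfera] using factorial_mul_ferferaAsc w 0

theorem sh_ferferaAsc (w : Word) : ∀ a b : ℕ,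
    sh (ferferaAsc a) (ferferaAsc b) w = ferferaAsc (a + b + 1) w := by
  induction w with
  | nil => intro a b; exact one_mul 1
  | cons i v ih =>
    intro a b
    rw [sh_cons]
    match i with
    | 0 => rw [lshift_zero_ferferaAsc, lshift_zero_ferferaAsc, sh_zero_left, sh_zero_right,
        add_zero]; exact (if_pos rfl).symm
    | 1 =>
      rw [lshift_one_ferferaAsc, lshift_one_ferferaAsc, sh_smul_left, sh_smul_right, ih, ih,
        ferferaAsc_cons_one, show a + 1 + b + 1 = a + b + 1 + 1 by omega,
        show a + (b + 1) + 1 = a + b + 1 + 1 by omega]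
      push_cast
      ring

/-- `prefixDegProd m η = ∏ (degW q + m)` over the proper prefixes `q` of `η`. -/
def prefixDegProd : ℕ → Word → ℝ
  | _, [] => 1
  | m, i :: ξ => (m + 1) * prefixDegProd (m + letterWeight i) ξ

theorem lshift_prefixDegProd (i : Fin 2) (m : ℕ) :
    lshift i (prefixDegProd m) = ((m : ℝ) + 1) • prefixDegProd (m + letterWeight i) := rfl

theorem prefixDegProd_append (η : Word) : ∀ (m : ℕ) (i : Fin 2),
    prefixDegProd m (η ++ [i]) = ((m + degW η : ℕ) : ℝ) * prefixDegProd m η := by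
  induction η with
  | nil => intro m i; simp [prefixDegProd, degW_nil]
  | cons j η ih =>
    intro m i
    rw [List.cons_append, prefixDegProd, prefixDegProd, ih, degW_cons]
    push_cast
    ring

theorem mcomp_prefixDegProd_neg_ferfera (m : ℕ) (w : Word) :
    mcomp (prefixDegProd m) (-ferfera) w = ferferaAsc m w := by
  induction hn : w.length using Nat.strong_induction_on generalizing w m with
  | _ n ih =>
  rcases w with _ | ⟨i, v⟩
  · exact mcomp_nil _ _
  have ihv : ∀ (m : ℕ) (u : Word), u.length ≤ v.length →
      mcomp (prefixDegProd m) (-ferfera) u = ferferaAsc m u :=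
    fun m u hu => ih u.length (by simp at hn; omega) m u rfl
  match i with
  | 0 =>
    have hsh : sh (-ferfera) (mcomp (lshift 1 (prefixDegProd m)) (-ferfera)) v
        = -((m : ℝ) + 1) * ferferaAsc (m + 2) v := by
      rw [sh_congr_right v _ _ (((m : ℝ) + 1) • ferferaAsc (m + 1)) fun u hu => by
          rw [lshift_prefixDegProd, letterWeight_one, mcomp_smul_left, Pi.smul_apply,
            Pi.smul_apply, ihv _ u hu],
        show -ferfera = (-1 : ℝ) • ferferaAsc 0 by rw [ferferaAsc_zero, neg_one_smul],
        sh_smul_left, sh_smul_right, sh_ferferaAsc, show 0 + (m + 1) + 1 = m + 2 by omega]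
      ring
    rw [mcomp_cons_zero, hsh, lshift_prefixDegProd, letterWeight_zero, mcomp_smul_left,
      Pi.smul_apply, ihv _ v le_rfl, smul_eq_mul, ferferaAsc_cons_zero]
    ring
  | 1 =>
    rw [mcomp_cons_one, lshift_prefixDegProd, letterWeight_one, mcomp_smul_left, Pi.smul_apply,
      ihv _ v le_rfl, ferferaAsc_cons_one, smul_eq_mul]

theorem gop_prefixDegProd_neg_ferfera : gop (prefixDegProd 0) (-ferfera) = 0 :=
  funext fun w => by simp [gop, mcomp_prefixDegProd_neg_ferfera, ferferaAsc_zero]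

section Antipode

variable {Δ : H →ₐ[ℝ] (H ⊗[ℝ] H)} {S : H →ₗ[ℝ] H}

theorem evalS_aw (c : Series) (η : Word) : evalS c (aw η) = c η := MvPolynomial.aeval_X c η

theorem counit_aw (η : Word) : counit (aw η) = 0 := evalS_aw 0 η

def evalRight (e : Series) : H ⊗[ℝ] H →ₗ[ℝ] H :=
  (TensorProduct.rid ℝ H).toLinearMap ∘ₗ TensorProduct.map LinearMap.id (evalS e).toLinearMap

theorem evalRight_tmul (e : Series) (p q : H) : evalRight e (p ⊗ₜ q) = evalS e q • p := rfl

theorem evalS_evalRight (c e : Series) (z : H ⊗[ℝ] H) :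
    evalS c (evalRight e z) = evalPair c e z := by
  induction z using TensorProduct.induction_on with
  | zero => simp
  | tmul p q => simp [evalRight_tmul, evalPair, mul_comm]
  | add x y hx hy => rw [map_add, map_add, hx, hy, map_add]

theorem evalRight_coproduct_aw (hΔ : IsFBCoproduct Δ) (e : Series) (η : Word) :
    evalRight e (Δ (aw η))
      = ∑ ξ ∈ wordsLe η.length, phi e ξ one η • aw ξ + algebraMap ℝ H (e η) := by
  refine MvPolynomial.funext fun c => ?_
  change evalS c _ = evalS c _
  rw [evalS_evalRight, hΔ, mcomp_eq_sum_wordsLe]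
  simp [evalS_aw, mul_comm]

theorem evalS_mul'_map_antipode (e : Series) (z : H ⊗[ℝ] H) :
    evalS e (LinearMap.mul' ℝ H (TensorProduct.map S LinearMap.id z))
      = evalS e (S (evalRight e z)) := by
  induction z using TensorProduct.induction_on with
  | zero => simp
  | tmul p q => simp [evalRight_tmul, mul_comm]
  | add x y hx hy => rw [map_add, map_add, map_add, hx, hy, map_add, map_add, map_add]

theorem antipode_one (hS : IsAntipode Δ S) : S 1 = 1 := by
  simpa [Algebra.TensorProduct.one_def] using hS.1 1

theorem gop_antipode_left (hΔ : IsFBCoproduct Δ) (hS : IsAntipode Δ S) (e : Series) :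
    gop (fun ξ => evalS e (S (aw ξ))) e = 0 := by
  funext η
  have h := congrArg (evalS e) (hS.1 (aw η))
  rw [evalS_mul'_map_antipode, evalRight_coproduct_aw hΔ, counit_aw, zero_smul, map_zero] at h
  simp only [map_add, map_sum, map_smul, Algebra.algebraMap_eq_smul_one, antipode_one hS,
    smul_eq_mul, map_one, mul_one] at h
  rw [gop, Pi.add_apply, mcomp_eq_sum_wordsLe, Pi.zero_apply, ← h]
  simp only [mul_comm, add_comm]

end Antipode

end Paper

open Paper in
/-- Let `c = Σ_{k≥0} k! x1^k` be the Ferfera series.  Then for every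
word `η ∈ X*`, the antipode `S` of the output feedback Hopf algebra satisfies
`(S a_{η x1})(−c) = deg(a_η) · (S a_η)(−c)` and `(S a_{η x0})(−c) = deg(a_η) · (S a_η)(−c)`,
where `deg(a_η) = 2|η|_{x0} + |η|_{x1} + 1`. -/
theorem antipode_ferfera_recursion
    (Δ : H →ₐ[ℝ] (H ⊗[ℝ] H)) (hΔ : IsFBCoproduct Δ)
    (S : H →ₗ[ℝ] H) (hS : IsAntipode Δ S) :
    ∀ η : Word,
      evalS (-ferfera) (S (aw (η ++ [1]))) = (degW η : ℝ) * evalS (-ferfera) (S (aw η)) ∧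
      evalS (-ferfera) (S (aw (η ++ [0]))) = (degW η : ℝ) * evalS (-ferfera) (S (aw η)) := by
  have hS_eval : ∀ ξ, evalS (-ferfera) (S (aw ξ)) = prefixDegProd 0 ξ :=
    congrFun (gop_left_injective (-ferfera)
      ((gop_antipode_left hΔ hS (-ferfera)).trans gop_prefixDegProd_neg_ferfera.symm))
  intro η
  simp only [hS_eval, prefixDegProd_append, zero_add, and_self]
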